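/- Let L be a thin Lie algebra (positively graded, dim L_1 = 2, satisfying the covering property) with dim L_3 = 1. Then no two consecutive homogeneous components L_m and L_{m+1} with m > 1 can both be two-dimensional; that is, any two diamonds are separated by at least one one-dimensional component. -/

import Mathlib

/-!
Choose a basis `x, y` of `L₁` with `[x, y, y] = 0`; this is where `dim L₃ = 1` enters. Then
`[z, x, y, y] + [z, y, y, x] = 2 [z, y, x, y]` for every `z`. Let `L_m, L_{m+1}` be the first pair
of adjacent diamonds; then `m ≥ 4` and `L_{m-1} = ⟨w⟩`. Write `[w, x, y] = γ [w, y, x] + δ [w, y, y]`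
in `L_{m+1}`. For `u ∈ L_{m-2}` with `[u, y] = σ w` the identity forces `[u, x] = 2δσ w`; for
`z ∈ L_{m-3}` it then forces `[z, x]` and `[z, y]` to be centralized by `L₁`, so by the covering
property they vanish, and then so does `z`. Since `L` is generated by `L₁`, no component below `L_m`
is zero, a contradiction.
-/

open Module Submodule

theorem iSupIndep.eq_of_le_of_iSup_eq_top {ι α : Type*} [CompleteLattice α] [IsModularLattice α]
    {C N : ι → α} (hC : iSupIndep C) (hle : ∀ i, N i ≤ C i) (htop : ⨆ i, N i = ⊤) (i : ι) :
    N i = C i := by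
  refine le_antisymm (hle i) ?_
  calc C i = (N i ⊔ ⨆ (j) (_ : j ≠ i), N j) ⊓ C i := by rw [← iSup_split_single, htop, top_inf_eq]
    _ ≤ (N i ⊔ ⨆ (j) (_ : j ≠ i), C j) ⊓ C i := by gcongr with j; exact hle j
    _ = N i := by rw [sup_inf_assoc_of_le _ (hle i), (hC i).symm.eq_bot, sup_bot_eq]

section LinearAlgebra

variable {F V : Type*} [Field F] [AddCommGroup V] [Module F V]

theorem exists_eq_span_pair_of_finrank_eq_two {W : Submodule F V} (hW : finrank F W = 2)
    {y : V} (hy : y ∈ W) (hy0 : y ≠ 0) : ∃ x ∈ W, W = span F {x, y} := by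
  have : FiniteDimensional F W := Module.finite_of_finrank_pos (by omega)
  have hlt : span F {y} < W := by
    refine lt_of_le_of_ne ((span_singleton_le_iff_mem _ _).2 hy) fun h ↦ ?_
    have := finrank_span_singleton (K := F) hy0
    rw [h] at this; omega
  obtain ⟨x, hxW, hx⟩ := SetLike.exists_of_lt hlt
  refine ⟨x, hxW, (eq_of_le_of_finrank_le (span_le.2 ?_) ?_).symm⟩
  · exact Set.insert_subset_iff.2 ⟨hxW, Set.singleton_subset_iff.2 hy⟩
  · have hlt' : span F {y} < span F {x, y} :=
      lt_of_le_of_ne (span_mono (by simp)) fun h ↦ hx (h ▸ subset_span (by simp))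
    have : FiniteDimensional F (span F {x, y}) := FiniteDimensional.span_of_finite F (by simp)
    have := Submodule.finrank_lt_finrank_of_lt hlt'
    rw [finrank_span_singleton hy0] at this
    omega

theorem exists_eq_span_singleton_of_eq_span_pair {W : Submodule F V} {a b : V}
    (hW : W = span F {a, b}) (h2 : finrank F W ≠ 2) (h0 : W ≠ ⊥) : ∃ w ≠ 0, W = span F {w} := by
  have : FiniteDimensional F W := hW ▸ FiniteDimensional.span_of_finite F (Set.toFinite _)
  obtain ⟨w, hw, hw0⟩ := W.ne_bot_iff.1 h0
  refine ⟨w, hw0, eq_span_singleton_of_mem_of_finrank_eq_one ?_ hw hw0⟩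
  have hle : finrank F W ≤ 2 := by
    classical
    have := finrank_span_finset_le_card (R := F) ({a, b} : Finset V)
    rw [Finset.coe_pair, Set.finrank, ← hW] at this
    exact this.trans Finset.card_le_two
  have := Submodule.one_le_finrank_iff.2 h0
  omega

theorem linearIndependent_pair_of_finrank_span_eq_two {a b : V}
    (h : finrank F (span F {a, b}) = 2) :
    LinearIndependent F ![a, b] := by
  rw [linearIndependent_iff_card_eq_finrank_span, Set.finrank, Matrix.range_cons_cons_empty, h, Fintype.card_fin]

end LinearAlgebra

section LieRing

variable {L : Type*} [LieRing L]

theorem lie_lie_lie_add_eq_two_nsmul_of_lie_lie_eq_zero {x y : L} (h : ⁅⁅x, y⁆, y⁆ = 0) (z : L) :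
    ⁅⁅⁅z, x⁆, y⁆, y⁆ + ⁅⁅⁅z, y⁆, y⁆, x⁆ = 2 • ⁅⁅⁅z, y⁆, x⁆, y⁆ := by
  have hexp : ∀ a : L, ⁅a, ⁅x, y⁆⁆ = ⁅⁅a, x⁆, y⁆ - ⁅⁅a, y⁆, x⁆ := fun a ↦ by
    rw [leibniz_lie, sub_eq_add_neg, lie_skew]
  have hxy : ⁅⁅z, ⁅x, y⁆⁆, y⁆ = ⁅⁅z, y⁆, ⁅x, y⁆⁆ := by
    have := leibniz_lie z ⁅x, y⁆ y
    rw [h, lie_zero, ← lie_skew ⁅x, y⁆ ⁅z, y⁆] at this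
    exact add_neg_eq_zero.1 this.symm
  rw [hexp, hexp, sub_lie, sub_eq_sub_iff_add_eq_add] at hxy
  rw [hxy, two_nsmul]

end LieRing

section LieAlgebra

variable {F L : Type*} [Field F] [LieRing L] [LieAlgebra F L]

theorem eq_two_mul_mul_of_lie_eq_smul {x y w u : L} {σ ρ γ δ : F} (hxyy : ⁅⁅x, y⁆, y⁆ = 0)
    (hind : LinearIndependent F ![⁅⁅w, y⁆, x⁆, ⁅⁅w, y⁆, y⁆])
    (hwxy : ⁅⁅w, x⁆, y⁆ = γ • ⁅⁅w, y⁆, x⁆ + δ • ⁅⁅w, y⁆, y⁆)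
    (huy : ⁅u, y⁆ = σ • w) (hux : ⁅u, x⁆ = ρ • w) : ρ = 2 * δ * σ := by
  have h := lie_lie_lie_add_eq_two_nsmul_of_lie_lie_eq_zero hxyy u
  simp only [huy, hux, smul_lie, hwxy] at h
  have h0 : (σ - 2 * γ * σ) • ⁅⁅w, y⁆, x⁆ + (ρ - 2 * δ * σ) • ⁅⁅w, y⁆, y⁆ = 0 := by
    linear_combination (norm := module) h
  exact sub_eq_zero.1 (LinearIndependent.pair_iff.1 hind _ _ h0).2

def leftNormedBrackets (V : Submodule F L) : ℕ → Submodule F L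
  | 0 => ⊥
  | 1 => V
  | k + 2 => map₂ (LieAlgebra.ad F L : L →ₗ[F] Module.End F L) (leftNormedBrackets V (k + 1)) V

variable {V : Submodule F L}

theorem lie_mem_leftNormedBrackets_succ {j : ℕ} {a u : L} (ha : a ∈ leftNormedBrackets V j)
    (hu : u ∈ V) : ⁅a, u⁆ ∈ leftNormedBrackets V (j + 1) := by
  match j with
  | 0 => simp_all [leftNormedBrackets]
  | j + 1 => exact apply_mem_map₂ _ ha hu

theorem lie_mem_leftNormedBrackets {j k : ℕ} {a b : L} (ha : a ∈ leftNormedBrackets V j)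
    (hb : b ∈ leftNormedBrackets V k) : ⁅a, b⁆ ∈ leftNormedBrackets V (j + k) := by
  induction k generalizing j a b with
  | zero => simp_all [leftNormedBrackets]
  | succ k ih =>
    cases k with
    | zero => exact lie_mem_leftNormedBrackets_succ ha hb
    | succ k =>
      have hle : leftNormedBrackets V (k + 2) ≤
          (leftNormedBrackets V (j + (k + 2))).comap (LieAlgebra.ad F L a) := by
        refine map₂_le.2 fun z hz u hu ↦ ?_
        have hz' : ⁅⁅a, z⁆, u⁆ ∈ leftNormedBrackets V (j + (k + 1) + 1) :=
          lie_mem_leftNormedBrackets_succ (ih ha hz) hu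
        have hu' : ⁅⁅a, u⁆, z⁆ ∈ leftNormedBrackets V (j + 1 + (k + 1)) :=
          ih (lie_mem_leftNormedBrackets_succ ha hu) hz
        show ⁅a, ⁅z, u⁆⁆ ∈ leftNormedBrackets V (j + (k + 2))
        rw [leibniz_lie, ← lie_skew z ⁅a, u⁆]
        exact add_mem hz' (neg_mem (by convert hu' using 2; omega))
      exact hle hb

theorem iSup_leftNormedBrackets_eq_top (hV : LieSubalgebra.lieSpan F L (V : Set L) = ⊤) :
    ⨆ k, leftNormedBrackets V k = ⊤ := by
  set S := ⨆ k, leftNormedBrackets V k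
  have hlie : map₂ (LieAlgebra.ad F L : L →ₗ[F] Module.End F L) S S ≤ S := by
    simp only [S, map₂_iSup_left, map₂_iSup_right, iSup_le_iff, map₂_le]
    exact fun _ _ _ ha _ hb ↦ le_iSup (leftNormedBrackets V) _ (lie_mem_leftNormedBrackets ha hb)
  obtain ⟨K, hK⟩ := S.exists_lieSubalgebra_coe_eq_iff.2 fun a b ha hb ↦
    hlie (apply_mem_map₂ _ ha hb)
  have hVK : (V : Set L) ⊆ K := by
    rw [← LieSubalgebra.coe_toSubmodule, hK]
    exact le_iSup (leftNormedBrackets V) 1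
  rw [← hK, LieSubalgebra.toSubmodule_eq_top, ← top_le_iff, ← hV]
  exact LieSubalgebra.lieSpan_le.2 hVK

end LieAlgebra

section Graded

variable {F L : Type*} [Field F] [LieRing L] [LieAlgebra F L] {C : ℕ → Submodule F L}

theorem leftNormedBrackets_le (hgrading : ∀ i j : ℕ, ∀ u ∈ C i, ∀ v ∈ C j, ⁅u, v⁆ ∈ C (i + j))
    (k : ℕ) : leftNormedBrackets (C 1) k ≤ C k := by
  induction k using Nat.twoStepInduction with
  | zero => exact bot_le
  | one => exact le_rfl
  | more k _ ih => exact map₂_le.2 fun z hz u hu ↦ hgrading (k + 1) 1 z (ih hz) u hu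

theorem leftNormedBrackets_eq (hinternal : DirectSum.IsInternal C)
    (hgrading : ∀ i j : ℕ, ∀ u ∈ C i, ∀ v ∈ C j, ⁅u, v⁆ ∈ C (i + j))
    (hgen : LieSubalgebra.lieSpan F L (C 1 : Set L) = ⊤) (k : ℕ) :
    leftNormedBrackets (C 1) k = C k :=
  hinternal.submodule_iSupIndep.eq_of_le_of_iSup_eq_top (leftNormedBrackets_le hgrading)
    (iSup_leftNormedBrackets_eq_top hgen) k

theorem eq_bot_of_le_of_eq_bot (hinternal : DirectSum.IsInternal C)
    (hgrading : ∀ i j : ℕ, ∀ u ∈ C i, ∀ v ∈ C j, ⁅u, v⁆ ∈ C (i + j))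
    (hgen : LieSubalgebra.lieSpan F L (C 1 : Set L) = ⊤) {i j : ℕ} (hi : 1 ≤ i) (hij : i ≤ j)
    (hCi : C i = ⊥) : C j = ⊥ := by
  induction j, hij using Nat.le_induction with
  | base => exact hCi
  | succ j hj ih =>
    obtain ⟨j, rfl⟩ : ∃ j', j = j' + 1 := ⟨j - 1, by omega⟩
    rw [← leftNormedBrackets_eq hinternal hgrading hgen] at ih ⊢
    rw [leftNormedBrackets, ih, map₂_bot_left]

theorem eq_span_lie_pair_of_cover
    (hcov : ∀ i : ℕ, 1 ≤ i → ∀ z ∈ C i, z ≠ 0 →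
      Submodule.span F {w : L | ∃ u ∈ C 1, w = ⁅z, u⁆} = C (i + 1))
    {x y : L} (hC1 : C 1 = span F {x, y}) {i : ℕ} (hi : 1 ≤ i) {z : L} (hz : z ∈ C i)
    (hz0 : z ≠ 0) : C (i + 1) = span F {⁅z, x⁆, ⁅z, y⁆} := by
  have himage : {w : L | ∃ u ∈ C 1, w = ⁅z, u⁆} = LieAlgebra.ad F L z '' (C 1 : Set L) := by
    ext w
    simp [eq_comm]
  rw [← hcov i hi z hz hz0, himage, span_image, span_eq, hC1, map_span, Set.image_pair]
  rfl

theorem eq_zero_of_lie_eq_zero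
    (hcov : ∀ i : ℕ, 1 ≤ i → ∀ z ∈ C i, z ≠ 0 →
      Submodule.span F {w : L | ∃ u ∈ C 1, w = ⁅z, u⁆} = C (i + 1))
    {x y : L} (hC1 : C 1 = span F {x, y}) {i : ℕ} (hi : 1 ≤ i) {u : L} (hu : u ∈ C i)
    (hux : ⁅u, x⁆ = 0) (huy : ⁅u, y⁆ = 0) (hne : C (i + 1) ≠ ⊥) : u = 0 := by
  by_contra hu0
  rw [eq_span_lie_pair_of_cover hcov hC1 hi hu hu0, hux, huy, Set.pair_eq_singleton,
    span_zero_singleton] at hne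
  exact hne rfl

theorem exists_eq_span_pair_lie_lie_eq_zero
    (hgrading : ∀ i j : ℕ, ∀ u ∈ C i, ∀ v ∈ C j, ⁅u, v⁆ ∈ C (i + j))
    (hcov : ∀ i : ℕ, 1 ≤ i → ∀ z ∈ C i, z ≠ 0 →
      Submodule.span F {w : L | ∃ u ∈ C 1, w = ⁅z, u⁆} = C (i + 1))
    (hdim1 : finrank F (C 1) = 2) (hdim3 : finrank F (C 3) = 1) :
    ∃ x y : L, C 1 = span F {x, y} ∧ ⁅⁅x, y⁆, y⁆ = 0 := by
  have : FiniteDimensional F (C 1) := Module.finite_of_finrank_pos (by omega)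
  have : FiniteDimensional F (C 3) := Module.finite_of_finrank_pos (by omega)
  obtain ⟨⟨e, he⟩, he0⟩ := Module.finrank_pos_iff_exists_ne_zero.1 (by omega : 0 < finrank F (C 1))
  have he0 : e ≠ 0 := by simpa using he0
  obtain ⟨x', -, hC1⟩ := exists_eq_span_pair_of_finrank_eq_two hdim1 he he0
  have hC2 : C 2 = span F {⁅e, x'⁆} := by
    rw [eq_span_lie_pair_of_cover hcov hC1 le_rfl he he0, lie_self, Set.pair_comm,
      span_insert_zero]
  obtain ⟨⟨y, hy⟩, hyker, hy0⟩ := (Submodule.ne_bot_iff _).1 (LinearMap.ker_ne_bot_of_finrank_lt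
    (f := (LieAlgebra.ad F L ⁅e, x'⁆).restrict (p := C 1) (q := C 3)
      fun v hv ↦ hgrading 2 1 _ (hC2 ▸ mem_span_singleton_self _) v hv) (by omega))
  have hy0 : y ≠ 0 := by simpa using hy0
  have hwy : ⁅⁅e, x'⁆, y⁆ = 0 := by simpa [LinearMap.restrict_apply] using hyker
  obtain ⟨x, hx, hC1⟩ := exists_eq_span_pair_of_finrank_eq_two hdim1 hy hy0
  obtain ⟨c, hc⟩ := mem_span_singleton.1 (hC2 ▸ hgrading 1 1 x hx y hy)
  exact ⟨x, y, hC1, by rw [← hc, smul_lie, hwy, smul_zero]⟩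

theorem finrank_succ_ne_two_of_eq_span_singleton
    (hgrading : ∀ i j : ℕ, ∀ u ∈ C i, ∀ v ∈ C j, ⁅u, v⁆ ∈ C (i + j))
    (hcov : ∀ i : ℕ, 1 ≤ i → ∀ z ∈ C i, z ≠ 0 →
      Submodule.span F {w : L | ∃ u ∈ C 1, w = ⁅z, u⁆} = C (i + 1))
    {x y : L} (hC1 : C 1 = span F {x, y}) (hxyy : ⁅⁅x, y⁆, y⁆ = 0) {k : ℕ} (hk : 1 ≤ k)
    (hCk : C k ≠ ⊥) (hCk1 : C (k + 1) ≠ ⊥) {w : L} (hw0 : w ≠ 0) (hw : C (k + 2) = span F {w})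
    (h3 : finrank F (C (k + 3)) = 2) : finrank F (C (k + 3 + 1)) ≠ 2 := by
  intro h4
  have hx : x ∈ C 1 := hC1 ▸ subset_span (by simp)
  have hy : y ∈ C 1 := hC1 ▸ subset_span (by simp)
  have hwC : w ∈ C (k + 2) := hw ▸ mem_span_singleton_self w
  have hCk2 : C (k + 2) ≠ ⊥ := by rwa [hw, Ne, span_singleton_eq_bot]
  have hC3 := eq_span_lie_pair_of_cover hcov hC1 (by omega) hwC hw0
  have hind3 := linearIndependent_pair_of_finrank_span_eq_two (hC3 ▸ h3)
  have hC4 := eq_span_lie_pair_of_cover hcov hC1 (by omega) (hgrading _ 1 w hwC y hy)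
    (hind3.ne_zero 1)
  have hind4 := linearIndependent_pair_of_finrank_span_eq_two (hC4 ▸ h4)
  obtain ⟨γ, δ, hγδ⟩ := mem_span_pair.1 (hC4 ▸ hgrading _ 1 _ (hgrading _ 1 w hwC x hx) y hy)
  have hact : ∀ u ∈ C (k + 1), ∃ σ : F, ⁅u, y⁆ = σ • w ∧ ⁅u, x⁆ = (2 * δ * σ) • w := by
    intro u hu
    obtain ⟨σ, hσ⟩ := mem_span_singleton.1 (hw ▸ hgrading _ 1 u hu y hy)
    obtain ⟨ρ, hρ⟩ := mem_span_singleton.1 (hw ▸ hgrading _ 1 u hu x hx)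
    refine ⟨σ, hσ.symm, ?_⟩
    rw [← hρ, eq_two_mul_mul_of_lie_eq_smul hxyy hind4 hγδ.symm hσ.symm hρ.symm]
  obtain ⟨z, hz, hz0⟩ := (C k).ne_bot_iff.1 hCk
  obtain ⟨σ₁, h1y, h1x⟩ := hact _ (hgrading k 1 z hz x hx)
  obtain ⟨σ₂, h2y, h2x⟩ := hact _ (hgrading k 1 z hz y hy)
  have h := lie_lie_lie_add_eq_two_nsmul_of_lie_lie_eq_zero hxyy z
  simp only [h1y, h2y, h2x, smul_lie] at h
  have h0 : σ₂ • ⁅w, x⁆ + (σ₁ - 4 * δ * σ₂) • ⁅w, y⁆ = 0 := by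
    linear_combination (norm := module) h
  obtain ⟨hσ₂, hσ₁⟩ := LinearIndependent.pair_iff.1 hind3 _ _ h0
  rw [hσ₂, mul_zero, sub_zero] at hσ₁
  have hzx : ⁅z, x⁆ = 0 := eq_zero_of_lie_eq_zero hcov hC1 (by omega)
    (hgrading k 1 z hz x hx) (by simp [h1x, hσ₁]) (by simp [h1y, hσ₁]) hCk2
  have hzy : ⁅z, y⁆ = 0 := eq_zero_of_lie_eq_zero hcov hC1 (by omega)
    (hgrading k 1 z hz y hy) (by simp [h2x, hσ₂]) (by simp [h2y, hσ₂]) hCk2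
  exact hz0 (eq_zero_of_lie_eq_zero hcov hC1 hk hz hzx hzy hCk1)

end Graded

theorem stmt_7_general (F : Type*) [Field F] (L : Type*) [LieRing L] [LieAlgebra F L]
    (C : ℕ → Submodule F L)
    (hinternal : DirectSum.IsInternal C)
    (hgrading : ∀ i j : ℕ, ∀ u ∈ C i, ∀ v ∈ C j, ⁅u, v⁆ ∈ C (i + j))
    (hdim1 : Module.finrank F (C 1) = 2)
    (hgen : LieSubalgebra.lieSpan F L (C 1 : Set L) = ⊤)
    (hcov : ∀ i : ℕ, 1 ≤ i → ∀ z ∈ C i, z ≠ 0 →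
      Submodule.span F {w : L | ∃ u ∈ C 1, w = ⁅z, u⁆} = C (i + 1))
    (hdim3 : Module.finrank F (C 3) = 1) :
    ∀ m : ℕ, 1 < m →
      ¬ (Module.finrank F (C m) = 2 ∧ Module.finrank F (C (m + 1)) = 2) := by
  obtain ⟨x, y, hC1, hxyy⟩ := exists_eq_span_pair_lie_lie_eq_zero hgrading hcov hdim1 hdim3
  intro m hm
  induction m using Nat.strong_induction_on with
  | _ m ih =>
  rintro ⟨hdiam₀, hdiam₁⟩
  obtain ⟨k, hk, rfl⟩ : ∃ k, 1 ≤ k ∧ m = k + 3 := by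
    have : m ≠ 2 := by rintro rfl; norm_num [hdim3] at hdiam₁
    have : m ≠ 3 := by rintro rfl; norm_num [hdim3] at hdiam₀
    exact ⟨m - 3, by omega, by omega⟩
  have hne : ∀ j, 1 ≤ j → j ≤ k + 3 → C j ≠ ⊥ := fun j hj hjm hCj ↦ by
    rw [eq_bot_of_le_of_eq_bot hinternal hgrading hgen hj hjm hCj, finrank_bot] at hdiam₀
    omega
  obtain ⟨z, hz, hz0⟩ := (C (k + 1)).ne_bot_iff.1 (hne (k + 1) (by omega) (by omega))
  obtain ⟨w, hw0, hw⟩ := exists_eq_span_singleton_of_eq_span_pair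
    (eq_span_lie_pair_of_cover hcov hC1 (by omega) hz hz0)
    (fun h ↦ ih (k + 2) (by omega) (by omega) ⟨h, hdiam₀⟩) (hne (k + 2) (by omega) (by omega))
  exact finrank_succ_ne_two_of_eq_span_singleton hgrading hcov hC1 hxyy hk
    (hne k hk (by omega)) (hne (k + 1) (by omega) (by omega)) hw0 hw hdiam₀ hdiam₁

/-- Let `L` be a thin Lie algebra (infinite-dimensional positively graded Lie algebra,
generated by `L_1` with `dim L_1 = 2`, each `dim L_i ≤ 2`, with the covering property)
with `dim L_3 = 1`. Then no two consecutive homogeneous components `L_m` and `L_{m+1}`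
with `m > 1` can both be two-dimensional (diamonds). -/
theorem stmt_7 (F : Type*) [Field F] (L : Type*) [LieRing L] [LieAlgebra F L]
    (C : ℕ → Submodule F L) (hC0 : C 0 = ⊥)
    (hinternal : DirectSum.IsInternal C)
    (hgrading : ∀ i j : ℕ, ∀ u ∈ C i, ∀ v ∈ C j, ⁅u, v⁆ ∈ C (i + j))
    (hdim1 : Module.finrank F (C 1) = 2)
    (hdimle : ∀ i : ℕ, Module.finrank F (C i) ≤ 2)
    (hgen : LieSubalgebra.lieSpan F L (C 1 : Set L) = ⊤)
    (hcov : ∀ i : ℕ, 1 ≤ i → ∀ z ∈ C i, z ≠ 0 →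
      Submodule.span F {w : L | ∃ u ∈ C 1, w = ⁅z, u⁆} = C (i + 1))
    (hinf : ¬ FiniteDimensional F L)
    (hdim3 : Module.finrank F (C 3) = 1) :
    ∀ m : ℕ, 1 < m →
      ¬ (Module.finrank F (C m) = 2 ∧ Module.finrank F (C (m + 1)) = 2) :=
  stmt_7_general F L C hinternal hgrading hdim1 hgen hcov hdim3
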